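/- arXiv:1903.01832 — 3 statements merged into one kernel-verified Lean document; each statement's English description precedes it below -/
import Mathlib

section
/- Let Π be an equitable partition, with n cells all of the same size |X|/n, of a d-class association scheme on a finite set X with intersection numbers p_{ij}^k, and let M_i denote the quotient matrices. Let p be a prime and q = p^m for a positive integer m. If for a fixed i ∈ {1,...,d} the prime p divides p_{ii}^k for every k ∈ {0,1,...,d}, then the F_q-span of the rows of the image of M_i in the n × n matrices over F_q (reducing entries modulo p and embedding F_p into F_q) is a self-orthogonal linear code of length n over F_q; equivalently, M_i · M_iᵀ = 0 over F_q. -/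
open Matrix Finset

/-!
Let `H = cellMatrix ℤ c` be the characteristic matrix of the partition: `A i * H = H * M i`.
Since every cell has `s > 0` points, `Hᵀ * H = s • 1`, hence `Hᵀ * A i * H = s • M i`; the left
side is symmetric, so `M i` is. Since `H` has a one in every row and no zero column,
`N ↦ H * N` is injective, so the quotient matrices satisfy the same relations as the `A i`:
`M i * M i = ∑ k, p_{ii}^k • M k`, which vanishes modulo `p`. Thus `M i * (M i)ᵀ = 0` over
`F_q`, i.e. the rows of `M i` are pairwise orthogonal, and then so is their span.
-/

theorem Matrix.dotProduct_eq_zero_of_mem_span_row {R m n : Type*} [CommSemiring R]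
    [Fintype m] [Fintype n] {A : Matrix m n R} (hA : A * Aᵀ = 0) {u v : n → R}
    (hu : u ∈ Submodule.span R (Set.range A.row))
    (hv : v ∈ Submodule.span R (Set.range A.row)) :
    u ⬝ᵥ v = 0 := by
  rw [← range_vecMulLinear] at hu hv
  obtain ⟨x, rfl⟩ := hu
  obtain ⟨y, rfl⟩ := hv
  simp only [vecMulLinear_apply]
  rw [← dotProduct_mulVec, ← mulVec_transpose, mulVec_mulVec, hA, zero_mulVec, dotProduct_zero]

section Partition

variable {X ι : Type*} [DecidableEq ι] (R : Type*)

def cellMatrix [Zero R] [One R] (c : X → ι) : Matrix X ι R :=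
  Matrix.of fun x j => if c x = j then 1 else 0

variable {R}

theorem cellMatrix_mul_apply [Fintype ι] [NonAssocSemiring R] {κ : Type*} (c : X → ι)
    (N : Matrix ι κ R) (x : X) (k : κ) : (cellMatrix R c * N) x k = N (c x) k := by
  simp [cellMatrix, mul_apply]

theorem cellMatrix_mul_injective [Fintype ι] [NonAssocSemiring R] {κ : Type*} {c : X → ι}
    (hc : Function.Surjective c) :
    Function.Injective fun N : Matrix ι κ R => cellMatrix R c * N := by
  intro N N' h
  ext j k
  obtain ⟨x, rfl⟩ := hc j
  simpa only [cellMatrix_mul_apply] using congrFun (congrFun h x) k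

theorem transpose_cellMatrix_mul_self [Fintype X] [NonAssocSemiring R] (c : X → ι) :
    (cellMatrix R c)ᵀ * cellMatrix R c = diagonal fun j => (#{x | c x = j} : R) := by
  ext j k
  simp only [mul_apply, transpose_apply, cellMatrix, of_apply, ite_zero_mul_ite_zero, mul_one,
    Finset.sum_boole, diagonal_apply]
  split_ifs with hjk
  · simp [hjk]
  · rw [filter_false_of_mem fun x _ h => hjk (h.1.symm.trans h.2), card_empty, Nat.cast_zero]

theorem transpose_eq_of_mul_cellMatrix_eq [Fintype X] [Fintype ι] [CommRing R]
    [NoZeroDivisors R] [CharZero R] {c : X → ι} (hc : Function.Surjective c) {s : ℕ}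
    (hsize : ∀ j, #{x | c x = j} = s)
    {A : Matrix X X R} (hA : Aᵀ = A) {M : Matrix ι ι R}
    (hM : A * cellMatrix R c = cellMatrix R c * M) : Mᵀ = M := by
  set H := cellMatrix R c
  have hHH : Hᵀ * H = (s : R) • (1 : Matrix ι ι R) := by
    rw [transpose_cellMatrix_mul_self, funext fun j => congrArg ((↑) : ℕ → R) (hsize j),
      ← smul_one_eq_diagonal]
  have hquot : Hᵀ * A * H = (s : R) • M := by
    rw [Matrix.mul_assoc, hM, ← Matrix.mul_assoc, hHH, smul_mul, Matrix.one_mul]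
  have hquot_symm : (Hᵀ * A * H)ᵀ = Hᵀ * A * H := by
    rw [transpose_mul, transpose_mul, transpose_transpose, hA, Matrix.mul_assoc]
  ext j k
  obtain ⟨x, rfl⟩ := hc j
  have hs : (s : R) ≠ 0 :=
    Nat.cast_ne_zero.mpr (hsize (c x) ▸ (Finset.card_pos.mpr ⟨x, by simp⟩).ne')
  have := congrFun (congrFun hquot_symm k) (c x)
  simp only [transpose_apply, hquot, Matrix.smul_apply, smul_eq_mul] at this
  exact (mul_left_cancel₀ hs this).symm

theorem mul_eq_sum_of_mul_cellMatrix_eq [Fintype X] [Fintype ι] [CommSemiring R]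
    {κ : Type*} [Fintype κ] {c : X → ι} (hc : Function.Surjective c)
    {A : κ → Matrix X X R} {M : κ → Matrix ι ι R}
    (hM : ∀ k, A k * cellMatrix R c = cellMatrix R c * M k) {i j : κ} {a : κ → R}
    (hmul : A i * A j = ∑ k, a k • A k) : M i * M j = ∑ k, a k • M k := by
  apply cellMatrix_mul_injective hc
  calc cellMatrix R c * (M i * M j) = A i * A j * cellMatrix R c := by
        rw [← Matrix.mul_assoc, ← hM i, Matrix.mul_assoc, ← hM j, ← Matrix.mul_assoc]
    _ = cellMatrix R c * ∑ k, a k • M k := by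
        simp only [hmul, Matrix.sum_mul, Matrix.mul_sum, smul_mul, Matrix.mul_smul, hM]

end Partition

theorem Matrix.map_intCast_eq_zero_of_dvd {m n F : Type*} [Ring F] (p : ℕ) [CharP F p]
    {N : Matrix m n ℤ} (hN : ∀ a b, (p : ℤ) ∣ N a b) : N.map (Int.cast : ℤ → F) = 0 := by
  ext a b
  exact (CharP.intCast_eq_zero_iff F p _).mpr (hN a b)

theorem quotient_matrix_spans_self_orthogonal_code_general
    {X : Type*} [Fintype X] (d n : ℕ)
    (p m : ℕ) [Fact p.Prime]
    (A : Fin (d + 1) → Matrix X X ℤ)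
    (pnum : Fin (d + 1) → Fin (d + 1) → Fin (d + 1) → ℕ)
    (hsymm : ∀ i, (A i)ᵀ = A i)
    (hmul : ∀ i j, A i * A j = ∑ k, (pnum i j k : ℤ) • A k)
    -- the partition into `n` nonempty cells, all of size `|X| / n`
    (c : X → Fin n) (hc : Function.Surjective c)
    (hsize : ∀ j, (Finset.univ.filter fun x => c x = j).card = Fintype.card X / n)
    -- the partition is equitable, with quotient matrices `M i`
    (M : Fin (d + 1) → Matrix (Fin n) (Fin n) ℤ)
    (hM : ∀ i, A i * (Matrix.of fun x j => if c x = j then (1 : ℤ) else 0)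
        = (Matrix.of fun x j => if c x = j then (1 : ℤ) else 0) * M i)
    (i : Fin (d + 1))
    (hdiv : ∀ k, p ∣ pnum i i k) :
    (∀ u ∈ Submodule.span (GaloisField p m)
        (Set.range fun r => ((M i).map (Int.cast : ℤ → GaloisField p m)) r),
     ∀ v ∈ Submodule.span (GaloisField p m)
        (Set.range fun r => ((M i).map (Int.cast : ℤ → GaloisField p m)) r),
       u ⬝ᵥ v = 0)
    ∧ ((M i).map (Int.cast : ℤ → GaloisField p m))
        * ((M i).map (Int.cast : ℤ → GaloisField p m))ᵀ = 0 := by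
  have hM_symm : (M i)ᵀ = M i := transpose_eq_of_mul_cellMatrix_eq hc hsize (hsymm i) (hM i)
  have hM_sq : M i * M i = ∑ k, (pnum i i k : ℤ) • M k :=
    mul_eq_sum_of_mul_cellMatrix_eq hc hM (hmul i i)
  have hzero : ((M i).map (Int.cast : ℤ → GaloisField p m))
      * ((M i).map (Int.cast : ℤ → GaloisField p m))ᵀ = 0 := calc
    _ = (M i * M i).map (Int.cast : ℤ → GaloisField p m) := by
      rw [← transpose_map, hM_symm]
      exact (Matrix.map_mul (f := Int.castRingHom _)).symm
    _ = 0 := by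
      refine map_intCast_eq_zero_of_dvd p fun a b => ?_
      simp only [hM_sq, Matrix.sum_apply, Matrix.smul_apply, smul_eq_mul]
      exact dvd_sum fun k _ => (Int.natCast_dvd_natCast.mpr (hdiv k)).mul_right _
  exact ⟨fun u hu v hv => dotProduct_eq_zero_of_mem_span_row hzero hu hv, hzero⟩

/-- If an equitable partition of a `d`-class association scheme has `n`
cells all of the same size `|X| / n`, `p` is a prime dividing `p i i k` for all `k`
(for a fixed `i ∈ {1, …, d}`), then the rows of `M i`, reduced mod `p` and viewed over
`F_q` with `q = p ^ m`, span a self-orthogonal code of length `n`; equivalently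
`M i * (M i)ᵀ = 0` over `F_q`. -/
theorem quotient_matrix_spans_self_orthogonal_code
    {X : Type*} [Fintype X] [DecidableEq X] (d n : ℕ)
    (p m : ℕ) [Fact p.Prime] (hm : 0 < m)
    (A : Fin (d + 1) → Matrix X X ℤ)
    (pnum : Fin (d + 1) → Fin (d + 1) → Fin (d + 1) → ℕ)
    (hsymm : ∀ i, (A i)ᵀ = A i)
    (h01 : ∀ i u v, A i u v = 0 ∨ A i u v = 1)
    (hA0 : A 0 = 1)
    (hsum : ∑ i, A i = Matrix.of fun _ _ => (1 : ℤ))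
    (hmul : ∀ i j, A i * A j = ∑ k, (pnum i j k : ℤ) • A k)
    -- the partition into `n` nonempty cells, all of size `|X| / n`
    (c : X → Fin n) (hc : Function.Surjective c)
    (hsize : ∀ j, (Finset.univ.filter fun x => c x = j).card = Fintype.card X / n)
    -- the partition is equitable, with quotient matrices `M i`
    (M : Fin (d + 1) → Matrix (Fin n) (Fin n) ℤ)
    (hM : ∀ i, A i * (Matrix.of fun x j => if c x = j then (1 : ℤ) else 0)
        = (Matrix.of fun x j => if c x = j then (1 : ℤ) else 0) * M i)
    (i : Fin (d + 1)) (hi : i ≠ 0)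
    (hdiv : ∀ k, p ∣ pnum i i k) :
    (∀ u ∈ Submodule.span (GaloisField p m)
        (Set.range fun r => ((M i).map (Int.cast : ℤ → GaloisField p m)) r),
     ∀ v ∈ Submodule.span (GaloisField p m)
        (Set.range fun r => ((M i).map (Int.cast : ℤ → GaloisField p m)) r),
       u ⬝ᵥ v = 0)
    ∧ ((M i).map (Int.cast : ℤ → GaloisField p m))
        * ((M i).map (Int.cast : ℤ → GaloisField p m))ᵀ = 0 :=
  quotient_matrix_spans_self_orthogonal_code_general d n p m A pnum hsymm hmul c hc hsize M hM i
    hdiv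
end

section
/- Let Γ be a distance-regular graph with diameter d and intersection numbers p_{ij}^k, let p be a prime and q = p^m, and let G be a group of automorphisms of Γ all of whose vertex orbits have the same size, with n orbits. Let H be the characteristic matrix of the orbit partition and M_i the quotient matrix of the distance-i matrix A_i with respect to this partition (so A_i H = H M_i). If there exists i ∈ {1,...,d} such that p divides p_{ii}^k for all k ∈ {0,1,...,d}, then the F_q-span of the rows of the image of M_i over F_q is a self-orthogonal linear code of length n over F_q; equivalently, M_i · M_iᵀ = 0 over F_q. -/
open Matrix Finset

/-!
Over `F_q` the square `A_i² = ∑ₖ p_{ii}^k A_k` vanishes because `p ∣ p_{ii}^k` for every `k`.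
From `A_i H = H M_i` we get `H M_i² = A_i² H = 0`, and since every orbit is nonempty the rows of
`H` pick out every row of `M_i²`, so `M_i² = 0`. If all orbits have size `s`, then `Hᵀ H = s I`,
hence `s M_i = Hᵀ A_i H` is symmetric and so is `M_i`. Thus `M_i M_iᵀ = M_i² = 0` over `F_q`,
i.e. the rows of `M_i` are pairwise orthogonal, and so is their span.
-/

namespace Matrix

variable {m n R : Type*} [Fintype n] [CommSemiring R]

theorem dotProduct_eq_zero_of_mem_span {s t : Set (n → R)}
    (h : ∀ a ∈ s, ∀ b ∈ t, a ⬝ᵥ b = 0) {u v : n → R}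
    (hu : u ∈ Submodule.span R s) (hv : v ∈ Submodule.span R t) : u ⬝ᵥ v = 0 := by
  have hs : ∀ a ∈ s, a ⬝ᵥ v = 0 := fun a ha =>
    LinearMap.eqOn_span (f := dotProductBilin R R a) (g := 0) (fun b hb => h a ha b hb) hv
  exact LinearMap.eqOn_span (f := (dotProductBilin R R).flip v) (g := 0) hs hu

theorem dotProduct_eq_zero_of_mem_span_rows {N : Matrix m n R} (hN : N * Nᵀ = 0) {u v : n → R}
    (hu : u ∈ Submodule.span R (Set.range N)) (hv : v ∈ Submodule.span R (Set.range N)) :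
    u ⬝ᵥ v = 0 := by
  refine dotProduct_eq_zero_of_mem_span ?_ hu hv
  rintro _ ⟨a, rfl⟩ _ ⟨b, rfl⟩
  simpa [mul_apply'] using congrFun₂ hN a b

end Matrix

section PartitionMatrix

variable {V ι κ : Type*} [DecidableEq ι]

def partitionMatrix (R : Type*) [Zero R] [One R] (o : V → ι) : Matrix V ι R :=
  of fun x j => if o x = j then 1 else 0

variable {R : Type*} {o : V → ι}

theorem partitionMatrix_mul_apply [NonAssocSemiring R] [Fintype ι] (N : Matrix ι κ R)
    (x : V) (b : κ) : (partitionMatrix R o * N) x b = N (o x) b := by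
  simp [partitionMatrix, mul_apply]

theorem map_partitionMatrix {S : Type*} [NonAssocSemiring R] [NonAssocSemiring S] (f : R →+* S) :
    (partitionMatrix R o).map f = partitionMatrix S o := by
  ext x j
  simp [partitionMatrix, apply_ite f]

theorem eq_zero_of_partitionMatrix_mul_eq_zero [NonAssocSemiring R] [Fintype ι]
    {N : Matrix ι κ R} (ho : Function.Surjective o) (h : partitionMatrix R o * N = 0) :
    N = 0 := by
  ext a b
  obtain ⟨x, rfl⟩ := ho a
  simpa [partitionMatrix_mul_apply] using congrFun₂ h x b

theorem transpose_partitionMatrix_mul_self [Fintype V] [NonAssocSemiring R] :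
    (partitionMatrix R o)ᵀ * partitionMatrix R o = diagonal fun j => (#{x | o x = j} : R) := by
  ext a b
  simp only [partitionMatrix, mul_apply, transpose_apply, of_apply, mul_ite, mul_one, mul_zero,
    ← ite_and, sum_boole, diagonal_apply]
  split_ifs with hab
  · simp [hab]
  · rw [filter_false_of_mem fun x _ h => hab (h.2.symm.trans h.1), card_empty, Nat.cast_zero]

theorem isSymm_of_mul_partitionMatrix [Fintype V] [Fintype ι] [CommSemiring R]
    [IsAddTorsionFree R] {A : Matrix V V R} {M : Matrix ι ι R} (hA : A.IsSymm)
    (ho : Function.Surjective o)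
    (hsize : ∀ j₁ j₂, #{x | o x = j₁} = #{x | o x = j₂})
    (hAM : A * partitionMatrix R o = partitionMatrix R o * M) : M.IsSymm := by
  refine IsSymm.ext fun a b => ?_
  set H := partitionMatrix R o
  set s := #{x | o x = a}
  have hs : s ≠ 0 := by
    obtain ⟨x, hx⟩ := ho a
    exact card_ne_zero.2 ⟨x, by simp [hx]⟩
  have hHH : Hᵀ * H = s • (1 : Matrix ι ι R) := by
    rw [transpose_partitionMatrix_mul_self, ← diagonal_one, ← diagonal_smul]
    congr 1
    ext j
    simp [hsize j a, s]
  have hconj : Hᵀ * A * H = s • M := by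
    rw [Matrix.mul_assoc, hAM, ← Matrix.mul_assoc, hHH, smul_mul, one_mul]
  have hconj_symm : (Hᵀ * A * H)ᵀ = Hᵀ * A * H := by
    rw [transpose_mul, transpose_mul, transpose_transpose, hA.eq, Matrix.mul_assoc]
  rw [hconj] at hconj_symm
  exact nsmul_right_injective hs (congrFun₂ hconj_symm a b)

end PartitionMatrix

namespace SimpleGraph

variable {V : Type*} (G : SimpleGraph V)

noncomputable def distMatrix (R : Type*) [Zero R] [One R] (i : ℕ) : Matrix V V R :=
  of fun u v => if G.dist u v = i then 1 else 0

variable {R : Type*}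

theorem isSymm_distMatrix [Zero R] [One R] (i : ℕ) : (G.distMatrix R i).IsSymm :=
  IsSymm.ext fun u v => by simp [distMatrix, dist_comm]

theorem map_distMatrix {S : Type*} [NonAssocSemiring R] [NonAssocSemiring S] (f : R →+* S)
    (i : ℕ) : (G.distMatrix R i).map f = G.distMatrix S i := by
  ext u v
  simp [distMatrix, apply_ite f]

theorem distMatrix_mul_self_apply [Fintype V] [NonAssocSemiring R] (i : ℕ) (u v : V) :
    (G.distMatrix R i * G.distMatrix R i) u v = #{w | G.dist u w = i ∧ G.dist v w = i} := by
  simp only [distMatrix, mul_apply, of_apply, ite_mul, one_mul, zero_mul, dist_comm (v := v),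
    ← ite_and, sum_boole]

end SimpleGraph

theorem drg_quotient_matrix_spans_self_orthogonal_code_general
    {V : Type*} [Fintype V]
    (G : SimpleGraph V)
    (d : ℕ) (hdiam : ∀ u v, G.dist u v ≤ d)
    (pnum : Fin (d + 1) → Fin (d + 1) → Fin (d + 1) → ℕ)
    (hdrg : ∀ i j k : Fin (d + 1), ∀ u v : V, G.dist u v = (k : ℕ) →
      (Finset.univ.filter fun w => G.dist u w = (i : ℕ) ∧ G.dist v w = (j : ℕ)).card
        = pnum i j k)
    (p m n : ℕ) [Fact p.Prime]
    -- the orbit partition: `o x` is the index of the orbit of `x`, there are `n` orbits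
    (o : V → Fin n) (ho : Function.Surjective o)
    -- all orbits have the same size
    (hsize : ∀ j₁ j₂ : Fin n, (Finset.univ.filter fun x => o x = j₁).card
        = (Finset.univ.filter fun x => o x = j₂).card)
    -- the quotient matrices of the distance matrices with respect to the orbit partition
    (M : Fin (d + 1) → Matrix (Fin n) (Fin n) ℤ)
    (hM : ∀ i : Fin (d + 1),
      (Matrix.of fun u v => if G.dist u v = (i : ℕ) then (1 : ℤ) else 0)
          * (Matrix.of fun x j => if o x = j then (1 : ℤ) else 0)
        = (Matrix.of fun x j => if o x = j then (1 : ℤ) else 0) * M i)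
    (i : Fin (d + 1))
    (hdiv : ∀ k, p ∣ pnum i i k) :
    (∀ u ∈ Submodule.span (GaloisField p m)
        (Set.range fun r => ((M i).map (Int.cast : ℤ → GaloisField p m)) r),
     ∀ v ∈ Submodule.span (GaloisField p m)
        (Set.range fun r => ((M i).map (Int.cast : ℤ → GaloisField p m)) r),
       u ⬝ᵥ v = 0)
    ∧ ((M i).map (Int.cast : ℤ → GaloisField p m))
        * ((M i).map (Int.cast : ℤ → GaloisField p m))ᵀ = 0 := by
  set F := GaloisField p m
  set N := (M i).map (Int.cast : ℤ → F)
  have hMi : G.distMatrix ℤ i * partitionMatrix ℤ o = partitionMatrix ℤ o * M i := hM i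
  have hAH : G.distMatrix F i * partitionMatrix F o = partitionMatrix F o * N := by
    have := congrArg (Matrix.map · (Int.castRingHom F)) hMi
    rwa [Matrix.map_mul, Matrix.map_mul, G.map_distMatrix, map_partitionMatrix] at this
  have hAA : G.distMatrix F i * G.distMatrix F i = 0 := by
    ext u v
    rw [G.distMatrix_mul_self_apply, Matrix.zero_apply, CharP.cast_eq_zero_iff F p,
      hdrg i i ⟨G.dist u v, Nat.lt_succ_of_le (hdiam u v)⟩ u v rfl]
    exact hdiv _
  have hNN : N * N = 0 := by
    refine eq_zero_of_partitionMatrix_mul_eq_zero ho ?_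
    rw [← Matrix.mul_assoc, ← hAH, Matrix.mul_assoc, ← hAH, ← Matrix.mul_assoc, hAA,
      Matrix.zero_mul]
  have hN_symm : Nᵀ = N :=
    ((isSymm_of_mul_partitionMatrix (G.isSymm_distMatrix i) ho hsize hMi).map _).eq
  have hNNt : N * Nᵀ = 0 := by rw [hN_symm, hNN]
  exact ⟨fun u hu v hv => dotProduct_eq_zero_of_mem_span_rows hNNt hu hv, hNNt⟩

/-- Let `Γ` be a distance-regular graph of diameter `d` with intersection
numbers `p i j k`, and let a group `G` of automorphisms act on `Γ` with `n` orbits, all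
of the same size.  If `p` is a prime dividing `p i i k` for all `k` (for some
`i ∈ {1, …, d}`), then the rows of the quotient matrix `M i`, viewed over `F_q` with
`q = p ^ m`, span a self-orthogonal code of length `n`; equivalently
`M i * (M i)ᵀ = 0` over `F_q`. -/
theorem drg_quotient_matrix_spans_self_orthogonal_code
    {V : Type*} [Fintype V] [DecidableEq V]
    (G : SimpleGraph V) (hconn : G.Connected)
    (d : ℕ) (hdiam : ∀ u v, G.dist u v ≤ d) (hdiam' : ∃ u v, G.dist u v = d)
    (pnum : Fin (d + 1) → Fin (d + 1) → Fin (d + 1) → ℕ)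
    (hdrg : ∀ i j k : Fin (d + 1), ∀ u v : V, G.dist u v = (k : ℕ) →
      (Finset.univ.filter fun w => G.dist u w = (i : ℕ) ∧ G.dist v w = (j : ℕ)).card
        = pnum i j k)
    (p m n : ℕ) [Fact p.Prime] (hm : 0 < m)
    -- a group of automorphisms of the graph
    (S : Subgroup (Equiv.Perm V))
    (hS : ∀ g ∈ S, ∀ u v : V, G.Adj (g u) (g v) ↔ G.Adj u v)
    -- the orbit partition: `o x` is the index of the orbit of `x`, there are `n` orbits
    (o : V → Fin n) (ho : Function.Surjective o)
    (horb : ∀ u v : V, o u = o v ↔ ∃ g ∈ S, g u = v)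
    -- all orbits have the same size
    (hsize : ∀ j₁ j₂ : Fin n, (Finset.univ.filter fun x => o x = j₁).card
        = (Finset.univ.filter fun x => o x = j₂).card)
    -- the quotient matrices of the distance matrices with respect to the orbit partition
    (M : Fin (d + 1) → Matrix (Fin n) (Fin n) ℤ)
    (hM : ∀ i : Fin (d + 1),
      (Matrix.of fun u v => if G.dist u v = (i : ℕ) then (1 : ℤ) else 0)
          * (Matrix.of fun x j => if o x = j then (1 : ℤ) else 0)
        = (Matrix.of fun x j => if o x = j then (1 : ℤ) else 0) * M i)
    (i : Fin (d + 1)) (hi : i ≠ 0)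
    (hdiv : ∀ k, p ∣ pnum i i k) :
    (∀ u ∈ Submodule.span (GaloisField p m)
        (Set.range fun r => ((M i).map (Int.cast : ℤ → GaloisField p m)) r),
     ∀ v ∈ Submodule.span (GaloisField p m)
        (Set.range fun r => ((M i).map (Int.cast : ℤ → GaloisField p m)) r),
       u ⬝ᵥ v = 0)
    ∧ ((M i).map (Int.cast : ℤ → GaloisField p m))
        * ((M i).map (Int.cast : ℤ → GaloisField p m))ᵀ = 0 :=
  drg_quotient_matrix_spans_self_orthogonal_code_general G d hdiam pnum hdrg p m n o ho hsize M hM i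
    hdiv
end

section
/- Let A_0, A_1, ..., A_d be the adjacency matrices of a d-class association scheme on a finite set X with |X| = n elements and intersection numbers p_{ij}^k, let p be a prime and q = p^m, and let I ⊆ {0,1,...,d}. If p divides p_{xy}^k for all k ∈ {0,1,...,d} and all x, y ∈ I, then for any two elements B, C of the non-unital F_q-subalgebra of n × n matrices over F_q generated by the images of the matrices A_i, i ∈ I (entries reduced modulo p and embedded in F_q), one has B · Cᵀ = 0; in particular, the row spaces of the elements of this algebra are pairwise orthogonal subspaces of F_q^n, so their collection is a self-orthogonal subspace code. -/
open Matrix Finset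

/-! The hypothesis `p ∣ p_{xy}^k` says exactly that `A_x A_y ≡ 0 (mod p)` for `x, y ∈ I`, so the
generators of the algebra have pairwise vanishing products over `F_q`. Products of generators then
vanish throughout the generated non-unital algebra. Since the generators are symmetric, that
algebra is closed under transposition, so `C ↦ Cᵀ` keeps `C` inside it and `B * Cᵀ = 0`; the
entries of `B * Cᵀ` are the inner products of the rows of `B` and `C`. -/

namespace NonUnitalAlgebra

variable {R A : Type*} [CommSemiring R] [NonUnitalSemiring A] [Module R A]
  [IsScalarTower R A A] [SMulCommClass R A A]

theorem mul_eq_zero_of_mem_adjoin {s : Set A} (hs : ∀ x ∈ s, ∀ y ∈ s, x * y = 0)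
    {a b : A} (ha : a ∈ adjoin R s) (hb : b ∈ adjoin R s) : a * b = 0 := by
  induction ha, hb using adjoin_induction₂ with
  | mem_mem x y hx hy => exact hs x hx y hy
  | zero_left => exact zero_mul _
  | zero_right => exact mul_zero _
  | add_left x y z _ _ _ hxz hyz => rw [add_mul, hxz, hyz, add_zero]
  | add_right x y z _ _ _ hxy hxz => rw [mul_add, hxy, hxz, add_zero]
  | mul_left x y z _ _ _ _ hyz => rw [mul_assoc, hyz, mul_zero]
  | mul_right x y z _ _ _ hxy _ => rw [← mul_assoc, hxy, zero_mul]
  | smul_left r x y _ _ hxy => rw [smul_mul_assoc, hxy, smul_zero]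
  | smul_right r x y _ _ hxy => rw [mul_smul_comm, hxy, smul_zero]

end NonUnitalAlgebra

namespace Matrix

theorem map_intCast_eq_zero_of_dvd_s5 {l m K : Type*} [Ring K] (p : ℕ) [CharP K p]
    {M : Matrix l m ℤ} (hM : ∀ i j, (p : ℤ) ∣ M i j) : M.map (Int.cast : ℤ → K) = 0 := by
  ext i j
  exact (CharP.intCast_eq_zero_iff K p _).mpr (hM i j)

variable {n : Type*} [Fintype n]

theorem transpose_mem_adjoin_of_forall_transpose_eq {R : Type*} [CommSemiring R]
    {s : Set (Matrix n n R)} (hs : ∀ M ∈ s, Mᵀ = M) {M : Matrix n n R}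
    (hM : M ∈ NonUnitalAlgebra.adjoin R s) : Mᵀ ∈ NonUnitalAlgebra.adjoin R s := by
  induction hM using NonUnitalAlgebra.adjoin_induction with
  | mem N hN => exact (hs N hN).symm ▸ NonUnitalAlgebra.subset_adjoin R hN
  | zero => rw [transpose_zero]; exact zero_mem _
  | add N N' _ _ hN hN' => exact transpose_add N N' ▸ add_mem hN hN'
  | mul N N' _ _ hN hN' => exact (transpose_mul N N').symm ▸ mul_mem hN' hN
  | smul r N _ hN => exact (transpose_smul r N).symm ▸ SMulMemClass.smul_mem r hN

theorem map_intCast_mul_map_intCast_eq_zero_of_dvd {ι K : Type*} [Fintype ι] [Ring K]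
    (p : ℕ) [CharP K p] {M N : Matrix n n ℤ} {A : ι → Matrix n n ℤ} {c : ι → ℕ}
    (hMN : M * N = ∑ k, (c k : ℤ) • A k) (hc : ∀ k, p ∣ c k) :
    M.map (Int.cast : ℤ → K) * N.map (Int.cast : ℤ → K) = 0 := by
  have hdvd : ∀ i j, (p : ℤ) ∣ (M * N) i j := fun i j => by
    rw [hMN, sum_apply]
    exact dvd_sum fun k _ => by
      simpa [smul_apply] using dvd_mul_of_dvd_left (Int.natCast_dvd_natCast.mpr (hc k)) _
  exact (Matrix.map_mul (f := Int.castRingHom K)).symm.trans (map_intCast_eq_zero_of_dvd_s5 p hdvd)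

theorem dotProduct_eq_zero_of_mul_transpose_eq_zero {l m K : Type*} [CommSemiring K]
    {B : Matrix l n K} {C : Matrix m n K} (hBC : B * Cᵀ = 0)
    {u v : n → K} (hu : u ∈ Submodule.span K (Set.range fun r => B r))
    (hv : v ∈ Submodule.span K (Set.range fun r => C r)) : u ⬝ᵥ v = 0 := by
  have hrows : ∀ r t, B r ⬝ᵥ C t = 0 := fun r t => by
    simpa [mul_apply'] using congrFun (congrFun hBC r) t
  refine (Submodule.mem_bot K).mp <|
    LinearMap.BilinMap.apply_apply_mem_of_mem_span ⊥ _ _ (dotProductBilin K K) ?_ u v hu hv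
  rintro _ ⟨r, rfl⟩ _ ⟨t, rfl⟩
  exact (Submodule.mem_bot K).mpr (hrows r t)

end Matrix

theorem scheme_algebra_row_spaces_self_orthogonal_subspace_code_general
    {X : Type*} [Fintype X] (d : ℕ)
    (p m : ℕ) [Fact p.Prime]
    (A : Fin (d + 1) → Matrix X X ℤ)
    (pnum : Fin (d + 1) → Fin (d + 1) → Fin (d + 1) → ℕ)
    (hsymm : ∀ i, (A i)ᵀ = A i)
    (hmul : ∀ i j, A i * A j = ∑ k, (pnum i j k : ℤ) • A k)
    (I : Set (Fin (d + 1)))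
    (hdiv : ∀ x ∈ I, ∀ y ∈ I, ∀ k, p ∣ pnum x y k) :
    ∀ B ∈ NonUnitalAlgebra.adjoin (GaloisField p m)
        ((fun i => (A i).map (Int.cast : ℤ → GaloisField p m)) '' I),
    ∀ C ∈ NonUnitalAlgebra.adjoin (GaloisField p m)
        ((fun i => (A i).map (Int.cast : ℤ → GaloisField p m)) '' I),
      B * Cᵀ = 0 ∧
      ∀ u ∈ Submodule.span (GaloisField p m) (Set.range fun r => B r),
      ∀ v ∈ Submodule.span (GaloisField p m) (Set.range fun r => C r),
        u ⬝ᵥ v = 0 := by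
  intro B hB C hC
  have hgen_mul : ∀ M ∈ (fun i => (A i).map (Int.cast : ℤ → GaloisField p m)) '' I,
      ∀ N ∈ (fun i => (A i).map (Int.cast : ℤ → GaloisField p m)) '' I, M * N = 0 := by
    rintro _ ⟨i, hi, rfl⟩ _ ⟨j, hj, rfl⟩
    exact map_intCast_mul_map_intCast_eq_zero_of_dvd p (hmul i j) (hdiv i hi j hj)
  have hgen_symm : ∀ M ∈ (fun i => (A i).map (Int.cast : ℤ → GaloisField p m)) '' I,
      Mᵀ = M := by
    rintro _ ⟨i, -, rfl⟩
    exact transpose_map.symm.trans (congrArg (Matrix.map · Int.cast) (hsymm i))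
  have hBC : B * Cᵀ = 0 := NonUnitalAlgebra.mul_eq_zero_of_mem_adjoin hgen_mul hB
    (transpose_mem_adjoin_of_forall_transpose_eq hgen_symm hC)
  exact ⟨hBC, fun u hu v hv => dotProduct_eq_zero_of_mul_transpose_eq_zero hBC hu hv⟩

/-- Let `A_0, …, A_d` be the adjacency matrices of a `d`-class association
scheme on a finite set `X`, `p` a prime, `q = p ^ m`, and `I ⊆ {0, …, d}`.  If
`p ∣ p x y k` for all `k` and all `x, y ∈ I`, then any two elements `B, C` of the
non-unital `F_q`-subalgebra generated by the images of the `A i`, `i ∈ I`, satisfy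
`B * Cᵀ = 0`; in particular the row spaces of the elements of this algebra are pairwise
orthogonal, i.e. they form a self-orthogonal subspace code. -/
theorem scheme_algebra_row_spaces_self_orthogonal_subspace_code
    {X : Type*} [Fintype X] [DecidableEq X] (d : ℕ)
    (p m : ℕ) [Fact p.Prime] (hm : 0 < m)
    (A : Fin (d + 1) → Matrix X X ℤ)
    (pnum : Fin (d + 1) → Fin (d + 1) → Fin (d + 1) → ℕ)
    (hsymm : ∀ i, (A i)ᵀ = A i)
    (h01 : ∀ i u v, A i u v = 0 ∨ A i u v = 1)
    (hA0 : A 0 = 1)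
    (hsum : ∑ i, A i = Matrix.of fun _ _ => (1 : ℤ))
    (hmul : ∀ i j, A i * A j = ∑ k, (pnum i j k : ℤ) • A k)
    (I : Set (Fin (d + 1)))
    (hdiv : ∀ x ∈ I, ∀ y ∈ I, ∀ k, p ∣ pnum x y k) :
    ∀ B ∈ NonUnitalAlgebra.adjoin (GaloisField p m)
        ((fun i => (A i).map (Int.cast : ℤ → GaloisField p m)) '' I),
    ∀ C ∈ NonUnitalAlgebra.adjoin (GaloisField p m)
        ((fun i => (A i).map (Int.cast : ℤ → GaloisField p m)) '' I),
      B * Cᵀ = 0 ∧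
      ∀ u ∈ Submodule.span (GaloisField p m) (Set.range fun r => B r),
      ∀ v ∈ Submodule.span (GaloisField p m) (Set.range fun r => C r),
        u ⬝ᵥ v = 0 :=
  scheme_algebra_row_spaces_self_orthogonal_subspace_code_general d p m A pnum hsymm hmul I hdiv
end
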